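/- No symmetric protocol can solve the uniform bipartition problem on a population of exactly two agents with designated (identical) initial states: for any symmetric deterministic protocol, in every execution starting from both agents in the same state, the two agents have identical states in every configuration, hence they always have the same color, so one group has size 2 and the other size 0, and |#red − #blue| = 2 ≠ 0 can never be avoided. -/
import Mathlib


/-- One step of a deterministic population protocol on a complete graph:
apply the transition function to an ordered pair of distinct agents. -/
def Step {Q : Type} {n : ℕ} (δ : Q → Q → Q × Q) (C C' : Fin n → Q) : Prop :=
  ∃ i j : Fin n, i ≠ j ∧
    C' = Function.update (Function.update C i (δ (C i) (C j)).1) j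
          (δ (C i) (C j)).2

/-- No symmetric protocol can bipartition a population of two agents starting
from identical designated initial states: the two agents always share the same
state, hence the same color under any color map `f`. -/
theorem stmt16 (Q : Type) (δ : Q → Q → Q × Q)
    (hsym : ∀ p q : Q, δ q p = ((δ p q).2, (δ p q).1))
    (q0 : Q) (C : Fin 2 → Q)
    (hreach : Relation.ReflTransGen (Step δ) (fun _ => q0) C) :
    C 0 = C 1 ∧ ∀ f : Q → Bool, f (C 0) = f (C 1) := by
  have key : C 0 = C 1 := by
    induction hreach with
    | refl => rfl
    | tail _ hstep ih =>
      obtain ⟨i, j, hij, rfl⟩ := hstep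
      rename_i D _
      have hdiag : ∀ p : Q, (δ p p).1 = (δ p p).2 := fun p =>
        congrArg Prod.fst (hsym p p)
      have h2 : ∀ k : Fin 2, k = 0 ∨ k = 1 := by decide
      rcases h2 i with rfl | rfl <;> rcases h2 j with rfl | rfl <;>
        first
        | exact absurd rfl hij
        | · simp [Function.update_apply, show (0:Fin 2) ≠ 1 by decide,
              show (1:Fin 2) ≠ 0 by decide, ih, hdiag]
  exact ⟨key, fun f => by rw [key]⟩
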